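/- arXiv:1808.08009 — 4 statements merged into one kernel-verified Lean document; each statement's English description precedes it below -/
import Mathlib

section
/- For every complex number v with |v| ≤ 1, the series ∑_{m=0}^∞ (2m)! v^{2m+1} / (4^m (m!)^2 (2m+1)) converges absolutely and equals arcsin(v). -/
/-!
Write `b n = centralBinom n / 4 ^ n`, so the `n`-th coefficient is `b n / (2n + 1)`. On the open
unit disk the series may be differentiated termwise; its derivative `∑ b n z^(2n)` is the
binomial series of `(1 - z²)^(-1/2)`, which is also the derivative of `carcsin`, and both
functions vanish at `0`. The recursion `b (n+1) = (2n+1)/(2n+2) · b n` gives `b n ≤ 1/√(n+1)`,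
so the coefficients are `O(n^(-3/2))`: the series converges absolutely and uniformly on the
closed disk, and continuity of both sides carries the identity to the boundary circle.
-/

open Complex

/-- The principal branch of the complex arcsine. -/
noncomputable def carcsin (z : ℂ) : ℂ :=
  -Complex.I * Complex.log (Complex.I * z + (1 - z ^ 2) ^ ((1 : ℂ) / 2))

open Filter Metric Set Nat

lemma centralBinom_succ_div_four_pow (n : ℕ) :
    (centralBinom (n + 1) : ℝ) / 4 ^ (n + 1) =
      (2 * n + 1) / (2 * n + 2) * (centralBinom n / 4 ^ n) := by
  have h : ((n : ℝ) + 1) * centralBinom (n + 1) = 2 * (2 * n + 1) * centralBinom n := by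
    exact_mod_cast succ_mul_centralBinom_succ n
  field_simp
  rw [pow_succ]
  linear_combination 4 ^ n * 2 * h

lemma sq_centralBinom_div_four_pow_mul_le_one (n : ℕ) :
    ((centralBinom n : ℝ) / 4 ^ n) ^ 2 * (n + 1) ≤ 1 := by
  induction n with
  | zero => simp
  | succ n ih =>
    have hratio : ((2 * n + 1) / (2 * n + 2) : ℝ) ^ 2 * (n + 2) ≤ n + 1 := by
      rw [div_pow, div_mul_eq_mul_div, div_le_iff₀ (by positivity)]
      nlinarith
    calc ((centralBinom (n + 1) : ℝ) / 4 ^ (n + 1)) ^ 2 * (↑(n + 1) + 1)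
        = ((centralBinom n : ℝ) / 4 ^ n) ^ 2 *
            (((2 * n + 1) / (2 * n + 2)) ^ 2 * (n + 2)) := by
          rw [centralBinom_succ_div_four_pow]; push_cast; ring
      _ ≤ ((centralBinom n : ℝ) / 4 ^ n) ^ 2 * (n + 1) := by gcongr
      _ ≤ 1 := ih

lemma centralBinom_div_four_pow_le_one_div_sqrt (n : ℕ) :
    (centralBinom n : ℝ) / 4 ^ n ≤ 1 / √(n + 1) := by
  rw [le_div_iff₀ (by positivity), ← pow_le_one_iff_of_nonneg (by positivity) two_ne_zero,
    mul_pow, Real.sq_sqrt (by positivity)]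
  exact sq_centralBinom_div_four_pow_mul_le_one n

noncomputable def arcsinCoeff (n : ℕ) : ℝ := (centralBinom n : ℝ) / 4 ^ n / (2 * n + 1)

lemma arcsinCoeff_nonneg (n : ℕ) : 0 ≤ arcsinCoeff n := by
  unfold arcsinCoeff; positivity

lemma arcsinCoeff_le (n : ℕ) : arcsinCoeff n ≤ 1 / |(n : ℝ) + 1| ^ (3 / 2 : ℝ) := by
  have hpos : (0 : ℝ) < n + 1 := by positivity
  rw [abs_of_pos hpos, show (3 / 2 : ℝ) = 1 + 1 / 2 by norm_num, Real.rpow_add hpos,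
    Real.rpow_one, ← Real.sqrt_eq_rpow, ← div_div]
  unfold arcsinCoeff
  calc (centralBinom n : ℝ) / 4 ^ n / (2 * n + 1)
        ≤ (centralBinom n : ℝ) / 4 ^ n / (n + 1) := by gcongr; linarith
    _ ≤ 1 / √(n + 1) / (n + 1) :=
        div_le_div_of_nonneg_right (centralBinom_div_four_pow_le_one_div_sqrt n) hpos.le
    _ = 1 / (n + 1) / √(n + 1) := div_right_comm _ _ _

lemma summable_arcsinCoeff : Summable arcsinCoeff :=
  ((Real.summable_one_div_nat_add_rpow 1 (3 / 2)).2 (by norm_num)).of_nonneg_of_le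
    arcsinCoeff_nonneg arcsinCoeff_le

lemma multichoose_inv_two (n : ℕ) :
    Ring.multichoose (2⁻¹ : ℂ) n = centralBinom n / 4 ^ n := by
  have hfact : (n ! : ℂ) ≠ 0 := by exact_mod_cast factorial_ne_zero n
  have h := Ring.factorial_nsmul_multichoose_eq_ascPochhammer (2⁻¹ : ℂ) n
  rw [Polynomial.ascPochhammer_smeval_eq_eval, nsmul_eq_mul] at h
  rw [← mul_right_inj' hfact, h]
  clear h hfact
  induction n with
  | zero => simp
  | succ n ih =>
    have h : ((n : ℂ) + 1) * centralBinom (n + 1) = 2 * (2 * n + 1) * centralBinom n := by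
      exact_mod_cast succ_mul_centralBinom_succ n
    rw [ascPochhammer_succ_eval, ih, factorial_succ]
    push_cast
    field_simp
    rw [pow_succ]
    linear_combination (-(n ! : ℂ) * 4 ^ n * 2) * h

lemma hasSum_centralBinom_div_four_pow_mul_pow {x : ℂ} (hx : ‖x‖ < 1) :
    HasSum (fun n => (centralBinom n / 4 ^ n : ℂ) * x ^ n) (1 / (1 - x) ^ (1 / 2 : ℂ)) := by
  have h := (one_div_one_sub_cpow_hasFPowerSeriesOnBall_zero (1 / 2)).hasSum
    (y := x) (by simpa [← ofReal_norm] using hx)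
  simpa [FormalMultilinearSeries.ofScalars_apply_eq, ← Ring.multichoose_eq, multichoose_inv_two,
    mul_comm] using h

noncomputable def arcsinSeries (z : ℂ) : ℂ := ∑' n, (arcsinCoeff n : ℂ) * z ^ (2 * n + 1)

lemma norm_arcsinCoeff_mul_pow_le {z : ℂ} (hz : ‖z‖ ≤ 1) (n : ℕ) :
    ‖(arcsinCoeff n : ℂ) * z ^ (2 * n + 1)‖ ≤ arcsinCoeff n := by
  rw [norm_mul, norm_real, Real.norm_of_nonneg (arcsinCoeff_nonneg n), norm_pow]
  exact mul_le_of_le_one_right (arcsinCoeff_nonneg n) (pow_le_one₀ (norm_nonneg z) hz)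

lemma hasDerivAt_arcsinCoeff_mul_pow (n : ℕ) (z : ℂ) :
    HasDerivAt (fun w => (arcsinCoeff n : ℂ) * w ^ (2 * n + 1))
      ((centralBinom n / 4 ^ n : ℂ) * (z ^ 2) ^ n) z := by
  refine ((hasDerivAt_pow (2 * n + 1) z).const_mul (arcsinCoeff n : ℂ)).congr_deriv ?_
  have : (2 * n + 1 : ℂ) ≠ 0 := by exact_mod_cast (succ_ne_zero (2 * n))
  rw [arcsinCoeff, add_tsub_cancel_right, ← pow_mul]
  push_cast
  field_simp

lemma continuousOn_arcsinSeries : ContinuousOn arcsinSeries (closedBall 0 1) :=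
  continuousOn_tsum (fun n => by fun_prop) summable_arcsinCoeff
    fun n z hz => norm_arcsinCoeff_mul_pow_le (mem_closedBall_zero_iff.1 hz) n

lemma hasDerivAt_arcsinSeries {z : ℂ} (hz : ‖z‖ < 1) :
    HasDerivAt arcsinSeries (1 / (1 - z ^ 2) ^ (1 / 2 : ℂ)) z := by
  have hdiff (n : ℕ) : DifferentiableOn ℂ (fun w => (arcsinCoeff n : ℂ) * w ^ (2 * n + 1))
      (ball 0 1) := by fun_prop
  have hbound (n : ℕ) (w : ℂ) (hw : w ∈ ball (0 : ℂ) 1) :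
      ‖(arcsinCoeff n : ℂ) * w ^ (2 * n + 1)‖ ≤ arcsinCoeff n :=
    norm_arcsinCoeff_mul_pow_le (mem_ball_zero_iff.1 hw).le n
  have hz' : z ∈ ball (0 : ℂ) 1 := mem_ball_zero_iff.2 hz
  have hderiv : deriv arcsinSeries z = 1 / (1 - z ^ 2) ^ (1 / 2 : ℂ) := by
    refine (hasSum_deriv_of_summable_norm summable_arcsinCoeff hdiff isOpen_ball hbound
      hz').unique ?_
    simp only [(hasDerivAt_arcsinCoeff_mul_pow _ z).deriv]
    exact hasSum_centralBinom_div_four_pow_mul_pow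
      (by simpa using pow_lt_one₀ (norm_nonneg z) hz two_ne_zero)
  rw [← hderiv]
  exact ((differentiableOn_tsum_of_summable_norm summable_arcsinCoeff hdiff isOpen_ball hbound z
    hz').differentiableAt (isOpen_ball.mem_nhds hz')).hasDerivAt

/-- With `u = (1 - z²)^(1/2)`: were `I z + u` a nonpositive real, then `u.im = -z.re` and
`0 ≤ u.re ≤ z.im`, contradicting `u.re² = 1 + z.im²`, the real part of `u² = 1 - z²`. -/
lemma I_mul_add_cpow_one_half_mem_slitPlane (z : ℂ) :
    I * z + (1 - z ^ 2) ^ (1 / 2 : ℂ) ∈ slitPlane := by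
  set u := (1 - z ^ 2) ^ (1 / 2 : ℂ) with hu
  have hu_re : 0 ≤ u.re := by rw [hu, one_div, cpow_inv_two_re]; positivity
  have hu_sq : u ^ 2 = 1 - z ^ 2 := by rw [hu, one_div, cpow_ofNat_inv_pow]
  have hre := congrArg re hu_sq
  simp only [pow_two, mul_re, sub_re, one_re] at hre
  rw [mem_slitPlane_iff]
  by_contra! h
  simp only [add_re, add_im, mul_re, mul_im, I_re, I_im] at h
  have hre_le : u.re ≤ z.im := by linarith [h.1]
  have him : u.im = -z.re := by linarith [h.2]
  rw [him] at hre
  nlinarith [mul_le_mul hre_le hre_le hu_re (hu_re.trans hre_le)]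

lemma hasDerivAt_carcsin {z : ℂ} (hz : 1 - z ^ 2 ∈ slitPlane) :
    HasDerivAt carcsin (1 / (1 - z ^ 2) ^ (1 / 2 : ℂ)) z := by
  set u := (1 - z ^ 2) ^ (1 / 2 : ℂ) with hu
  have hu_sq : u ^ 2 = 1 - z ^ 2 := by rw [hu, one_div, cpow_ofNat_inv_pow]
  have hu0 : u ≠ 0 := by
    rintro h
    exact slitPlane_ne_zero hz (by rw [← hu_sq, h]; ring)
  have hg0 := slitPlane_ne_zero (I_mul_add_cpow_one_half_mem_slitPlane z)
  have hsqrt : HasDerivAt (fun w => (1 - w ^ 2) ^ (1 / 2 : ℂ)) (-z / u) z := by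
    convert ((hasDerivAt_pow 2 z).const_sub 1).cpow_const (c := 1 / 2) hz using 1
    rw [cpow_sub _ _ (slitPlane_ne_zero hz), cpow_one, ← hu, ← hu_sq]
    field_simp
    ring
  refine ((((hasDerivAt_id z).const_mul I).add hsqrt).clog
    (I_mul_add_cpow_one_half_mem_slitPlane z)).const_mul (-I) |>.congr_deriv ?_
  simp only [Pi.add_apply, id, ← hu] at hg0 ⊢
  field_simp
  linear_combination (-u) * I_sq

lemma continuousAt_carcsin {z : ℂ} (hz : 0 ≤ (1 - z ^ 2).re) : ContinuousAt carcsin z := by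
  have hsqrt : ContinuousAt (fun w : ℂ => (1 - w ^ 2) ^ (1 / 2 : ℂ)) z :=
    ContinuousAt.comp (g := fun x : ℂ => x ^ (1 / 2 : ℂ))
      (continuousAt_cpow_const_of_re_pos (Or.inl hz) (by norm_num)) (by fun_prop)
  exact continuousAt_const.mul (((continuousAt_const.mul continuousAt_id).add hsqrt).clog
    (I_mul_add_cpow_one_half_mem_slitPlane z))

lemma re_one_sub_sq_nonneg {z : ℂ} (hz : ‖z‖ ≤ 1) : 0 ≤ (1 - z ^ 2).re := by
  have h := (abs_re_le_norm z).trans hz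
  simp only [sub_re, one_re, pow_two, mul_re]
  nlinarith [abs_le.1 h]

lemma one_sub_sq_mem_slitPlane {z : ℂ} (hz : ‖z‖ < 1) : 1 - z ^ 2 ∈ slitPlane := by
  simpa [sub_eq_add_neg] using mem_slitPlane_of_norm_lt_one (z := -z ^ 2)
    (by simpa using pow_lt_one₀ (norm_nonneg z) hz two_ne_zero)

lemma eqOn_arcsinSeries_carcsin_ball : EqOn arcsinSeries carcsin (ball 0 1) := by
  have hseries {z : ℂ} (hz : z ∈ ball (0 : ℂ) 1) :=
    hasDerivAt_arcsinSeries (mem_ball_zero_iff.1 hz)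
  have hcarcsin {z : ℂ} (hz : z ∈ ball (0 : ℂ) 1) :=
    hasDerivAt_carcsin (one_sub_sq_mem_slitPlane (mem_ball_zero_iff.1 hz))
  exact isOpen_ball.eqOn_of_deriv_eq (convex_ball 0 1).isPreconnected
    (fun z hz => (hseries hz).differentiableAt.differentiableWithinAt)
    (fun z hz => (hcarcsin hz).differentiableAt.differentiableWithinAt)
    (fun z hz => (hseries hz).deriv.trans (hcarcsin hz).deriv.symm)
    (mem_ball_self one_pos) (by simp [arcsinSeries, carcsin])

lemma eqOn_arcsinSeries_carcsin : EqOn arcsinSeries carcsin (closedBall 0 1) := by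
  have hcont : ContinuousOn carcsin (closedBall 0 1) := fun z hz =>
    (continuousAt_carcsin (re_one_sub_sq_nonneg (mem_closedBall_zero_iff.1 hz))).continuousWithinAt
  refine eqOn_arcsinSeries_carcsin_ball.of_subset_closure continuousOn_arcsinSeries hcont
    ball_subset_closedBall ?_
  rw [closure_ball 0 one_ne_zero]

lemma arcsinCoeff_mul_pow (n : ℕ) (z : ℂ) : (arcsinCoeff n : ℂ) * z ^ (2 * n + 1) =
    (2 * n)! * z ^ (2 * n + 1) / (4 ^ n * (n ! : ℂ) ^ 2 * (2 * n + 1)) := by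
  have hfact : (2 * n)! = centralBinom n * n ! * n ! := by
    rw [centralBinom, ← choose_mul_factorial_mul_factorial (by omega : n ≤ 2 * n), two_mul,
      Nat.add_sub_cancel]
  have : (2 * n + 1 : ℂ) ≠ 0 := by exact_mod_cast (succ_ne_zero (2 * n))
  have : (n ! : ℂ) ≠ 0 := by exact_mod_cast factorial_ne_zero n
  rw [hfact, arcsinCoeff]
  push_cast
  field_simp

theorem arcsin_series (v : ℂ) (hv : ‖v‖ ≤ 1) :
    Summable (fun m : ℕ =>
      ‖((Nat.factorial (2 * m) : ℂ) * v ^ (2 * m + 1)) /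
        ((4 : ℂ) ^ m * (Nat.factorial m : ℂ) ^ 2 * (2 * m + 1))‖) ∧
    (∑' m : ℕ, ((Nat.factorial (2 * m) : ℂ) * v ^ (2 * m + 1)) /
        ((4 : ℂ) ^ m * (Nat.factorial m : ℂ) ^ 2 * (2 * m + 1))) = carcsin v := by
  simp only [← arcsinCoeff_mul_pow]
  exact ⟨summable_arcsinCoeff.of_nonneg_of_le (fun _ => norm_nonneg _)
    (norm_arcsinCoeff_mul_pow_le hv), eqOn_arcsinSeries_carcsin (mem_closedBall_zero_iff.2 hv)⟩
end

section
/- For every complex v with |v| < 1, (1/π) ∫_0^∞ log(1 - v sech(πu)) du = - ∑_{m=1}^∞ v^m B(m/2, 1/2) / (2π^2 m), where B is the Beta function and log is the principal branch. -/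
open Real Complex MeasureTheory

/-- The Euler Beta function, as a real integral. -/
noncomputable def Beta (a b : ℝ) : ℝ :=
  ∫ t in (0 : ℝ)..1, t ^ (a - 1) * (1 - t) ^ (b - 1)

/-!
Since `‖v sech(πu)‖ ≤ ‖v‖ < 1`, the logarithm is `-∑ v^m sech(πu)^m / m`; the series is dominated
by `‖v‖^m sech(πu)`, which is summable in `L¹`, so it may be integrated term by term. The moments
`∫₀^∞ sech(πu)^m du` are computed by the substitution `w = sech²(πu)`, which turns them into
`B(m/2, 1/2) / (2π)` because `1 - sech² = tanh²`.
-/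

open Set

section LogSeries

variable {α : Type*} [MeasurableSpace α] {μ : Measure α}

lemma MeasureTheory.Integrable.pow_succ_of_norm_le_one {R : Type*} [NormedRing R] {f : α → R}
    (hf : Integrable f μ) (hf1 : ∀ᵐ x ∂μ, ‖f x‖ ≤ 1) (n : ℕ) :
    Integrable (fun x => f x ^ (n + 1)) μ :=
  hf.norm.mono' (hf.aestronglyMeasurable.pow _) <| hf1.mono fun _ hx =>
    (norm_pow_le' _ n.succ_pos).trans (pow_le_of_le_one (norm_nonneg _) hx n.succ_ne_zero)

variable {f : α → ℂ}

theorem integral_log_one_sub_mul (hf : Integrable f μ) (hf1 : ∀ᵐ x ∂μ, ‖f x‖ ≤ 1) {v : ℂ}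
    (hv : ‖v‖ < 1) :
    ∫ x, log (1 - v * f x) ∂μ =
      -∑' m : ℕ, v ^ (m + 1) / (m + 1) * ∫ x, f x ^ (m + 1) ∂μ := by
  set c : ℕ → ℂ := fun m => v ^ (m + 1) / (m + 1)
  have hc : ∀ m, ‖c m‖ ≤ ‖v‖ ^ (m + 1) := fun m => by
    rw [norm_div, norm_pow]
    refine div_le_self (by positivity) ?_
    rw [← Nat.cast_succ, Complex.norm_natCast]
    exact Nat.one_le_cast.2 m.succ_pos
  have hint : ∀ m, Integrable (fun x => c m * f x ^ (m + 1)) μ := fun m =>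
    (hf.pow_succ_of_norm_le_one hf1 m).const_mul _
  have hsummable : Summable fun m => ∫ x, ‖c m * f x ^ (m + 1)‖ ∂μ := by
    refine .of_nonneg_of_le (fun m => integral_nonneg fun _ => norm_nonneg _) (fun m => ?_)
      (((summable_geometric_of_lt_one (norm_nonneg v) hv).mul_left ‖v‖).mul_right
        (∫ x, ‖f x‖ ∂μ))
    rw [← pow_succ', ← integral_const_mul]
    refine integral_mono_ae (hint m).norm (hf.norm.const_mul _) (hf1.mono fun x hx => ?_)
    simp only [norm_mul, norm_pow]
    exact mul_le_mul (hc m) (pow_le_of_le_one (norm_nonneg _) hx m.succ_ne_zero)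
      (by positivity) (by positivity)
  have hlog : ∀ᵐ x ∂μ, ∑' m, c m * f x ^ (m + 1) = -log (1 - v * f x) := hf1.mono fun x hx => by
    have hvx : ‖v * f x‖ < 1 := by
      rw [norm_mul]
      exact (mul_le_of_le_one_right (norm_nonneg v) hx).trans_lt hv
    rw [← (hasSum_taylorSeries_neg_log' hvx).tsum_eq]
    exact tsum_congr fun m => by simp only [c, mul_pow]; ring
  calc ∫ x, log (1 - v * f x) ∂μ = -∫ x, ∑' m, c m * f x ^ (m + 1) ∂μ := by
        rw [← integral_neg]
        exact integral_congr_ae (hlog.mono fun x hx => by simp [hx])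
    _ = -∑' m, c m * ∫ x, f x ^ (m + 1) ∂μ := by
        rw [← integral_tsum_of_summable_integral_norm hint hsummable]
        simp only [integral_const_mul]

end LogSeries

lemma inv_cosh_le_two_mul_exp_neg (x : ℝ) : (Real.cosh x)⁻¹ ≤ 2 * rexp (-x) := by
  have h : rexp x / 2 ≤ Real.cosh x := by
    rw [Real.cosh_eq]
    linarith [Real.exp_pos (-x)]
  calc (Real.cosh x)⁻¹ ≤ (rexp x / 2)⁻¹ := inv_anti₀ (by positivity) h
    _ = 2 * rexp (-x) := by rw [Real.exp_neg]; field_simp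

lemma integrableOn_inv_cosh_mul_Ioi {c : ℝ} (hc : 0 < c) :
    IntegrableOn (fun u => (Real.cosh (c * u))⁻¹) (Ioi 0) :=
  ((exp_neg_integrableOn_Ioi 0 hc).const_mul 2).mono' (by fun_prop) <|
    .of_forall fun u => by
      rw [Real.norm_of_nonneg (inv_nonneg.2 (Real.cosh_pos _).le), neg_mul]
      exact inv_cosh_le_two_mul_exp_neg _

lemma hasDerivAt_inv_cosh_sq (u : ℝ) :
    HasDerivAt (fun x => (Real.cosh x)⁻¹ ^ 2) (-2 * Real.sinh u / Real.cosh u ^ 3) u := by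
  refine (((Real.hasDerivAt_cosh u).inv (Real.cosh_pos u).ne').pow 2).congr_deriv ?_
  simp only [Pi.inv_apply, Nat.cast_ofNat, Nat.add_one_sub_one, pow_one]
  field_simp

lemma injOn_inv_cosh_sq : InjOn (fun u => (Real.cosh u)⁻¹ ^ 2) (Ioi 0) := fun a ha b hb hab => by
  rw [pow_left_inj₀ (inv_nonneg.2 (Real.cosh_pos a).le) (inv_nonneg.2 (Real.cosh_pos b).le)
    two_ne_zero, inv_inj] at hab
  exact Real.cosh_strictMonoOn.injOn (mem_Ici_of_Ioi ha) (mem_Ici_of_Ioi hb) hab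

lemma image_inv_cosh_sq_Ioi : (fun u => (Real.cosh u)⁻¹ ^ 2) '' Ioi 0 = Ioo 0 1 := by
  ext w
  constructor
  · rintro ⟨u, hu, rfl⟩
    have hcosh : 1 < Real.cosh u := Real.one_lt_cosh.2 (ne_of_gt hu)
    exact ⟨by positivity, pow_lt_one₀ (by positivity) (inv_lt_one_of_one_lt₀ hcosh) two_ne_zero⟩
  · rintro ⟨hw0, hw1⟩
    have hw : 0 < w⁻¹ - 1 := by linarith [one_lt_inv₀ hw0 |>.2 hw1]
    -- `u = arsinh √(1/w - 1)` solves `cosh² u = 1/w`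
    refine ⟨arsinh √(w⁻¹ - 1), Real.arsinh_pos_iff.2 (Real.sqrt_pos.2 hw), ?_⟩
    dsimp only
    rw [Real.cosh_arsinh, inv_pow, Real.sq_sqrt (by positivity), Real.sq_sqrt hw.le]
    simp

lemma abs_deriv_mul_beta_integrand_inv_cosh_sq (a : ℝ) {u : ℝ} (hu : 0 < u) :
    |-2 * Real.sinh u / Real.cosh u ^ 3| *
        (((Real.cosh u)⁻¹ ^ 2) ^ (a - 1) * (1 - (Real.cosh u)⁻¹ ^ 2) ^ (1 / 2 - 1 : ℝ)) =
      2 * (Real.cosh u)⁻¹ ^ (2 * a) := by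
  have hc := Real.cosh_pos u
  have hs : 0 < Real.sinh u := Real.sinh_pos_iff.2 hu
  have htanh : 1 - (Real.cosh u)⁻¹ ^ 2 = (Real.sinh u / Real.cosh u) ^ 2 := by
    field_simp
    linarith [Real.cosh_sq u]
  rw [htanh, ← Real.rpow_natCast_mul (by positivity), ← Real.rpow_natCast_mul (by positivity),
    show ((2 : ℕ) : ℝ) * (1 / 2 - 1) = -1 by norm_num, Real.rpow_neg_one,
    show ((2 : ℕ) : ℝ) * (a - 1) = 2 * a - 2 by push_cast; ring,
    Real.rpow_sub (by positivity), abs_of_neg (div_neg_of_neg_of_pos (by linarith) (by positivity))]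
  simp only [Real.rpow_two]
  field_simp

theorem integral_Ioi_inv_cosh_rpow (a : ℝ) :
    ∫ u in Ioi 0, (Real.cosh u)⁻¹ ^ (2 * a) = Beta a (1 / 2) / 2 := by
  have hsubst := integral_image_eq_integral_abs_deriv_smul measurableSet_Ioi
    (fun u _ => (hasDerivAt_inv_cosh_sq u).hasDerivWithinAt) injOn_inv_cosh_sq
    (fun w => w ^ (a - 1) * (1 - w) ^ (1 / 2 - 1 : ℝ))
  simp only [image_inv_cosh_sq_Ioi, smul_eq_mul] at hsubst
  rw [Beta, intervalIntegral.integral_of_le zero_le_one, integral_Ioc_eq_integral_Ioo, hsubst,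
    setIntegral_congr_fun measurableSet_Ioi
      fun u hu => abs_deriv_mul_beta_integrand_inv_cosh_sq a hu, integral_const_mul]
  ring

theorem integral_Ioi_inv_cosh_mul_pow {c : ℝ} (hc : 0 < c) (n : ℕ) :
    ∫ u in Ioi 0, (Real.cosh (c * u))⁻¹ ^ n = Beta (n / 2) (1 / 2) / (2 * c) := by
  have h := integral_Ioi_inv_cosh_rpow (n / 2)
  simp only [mul_div_cancel₀ (n : ℝ) two_ne_zero, Real.rpow_natCast] at h
  rw [integral_comp_mul_left_Ioi (fun u => (Real.cosh u)⁻¹ ^ n) 0 hc, mul_zero, h, smul_eq_mul]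
  field_simp

theorem log_sech_integral (v : ℂ) (hv : ‖v‖ < 1) :
    (1 / (π : ℂ)) * (∫ u in Set.Ioi (0 : ℝ),
        Complex.log (1 - v * (1 / (Real.cosh (π * u) : ℂ)))) =
      -∑' m : ℕ, v ^ (m + 1) * (Beta (((m : ℝ) + 1) / 2) (1 / 2) : ℂ) /
        (2 * (π : ℂ) ^ 2 * ((m : ℂ) + 1)) := by
  have hsech : ∀ u : ℝ, 1 / (Real.cosh (π * u) : ℂ) = ((Real.cosh (π * u))⁻¹ : ℝ) := fun u => by
    push_cast; rw [one_div]
  have hint : IntegrableOn (fun u : ℝ => 1 / (Real.cosh (π * u) : ℂ)) (Ioi 0) := by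
    simp only [hsech]
    exact (integrableOn_inv_cosh_mul_Ioi pi_pos).ofReal
  have hle : ∀ u : ℝ, ‖1 / (Real.cosh (π * u) : ℂ)‖ ≤ 1 := fun u => by
    rw [hsech, Complex.norm_real, Real.norm_of_nonneg (inv_nonneg.2 (Real.cosh_pos _).le)]
    exact inv_le_one_of_one_le₀ (Real.one_le_cosh _)
  have hmoment : ∀ m : ℕ, ∫ u in Ioi 0, (1 / (Real.cosh (π * u) : ℂ)) ^ (m + 1) =
      ((Beta (((m : ℝ) + 1) / 2) (1 / 2) / (2 * π) : ℝ) : ℂ) := fun m => by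
    simp only [hsech, ← Complex.ofReal_pow]
    rw [integral_complex_ofReal, integral_Ioi_inv_cosh_mul_pow pi_pos, Nat.cast_succ]
  rw [integral_log_one_sub_mul hint (.of_forall hle) hv, mul_neg, ← tsum_mul_left]
  congr 1
  refine tsum_congr fun m => ?_
  rw [hmoment]
  push_cast
  field_simp
end

section
/- The double sum ∑_{n=0}^{N-1} ∑_{m=N}^{∞} 1/(n+m+1)^2 is bounded uniformly in N; i.e., sup_N ∑_{n=0}^{N-1} ∑_{m=N}^{∞} 1/(n+m+1)^2 < ∞. -/
/-! Each row of the block is dominated by a telescoping series: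
`1 / (a + m + 1)^2 ≤ 1 / (a + m) - 1 / (a + m + 1)`, so row `n` sums to at most
`1 / (n + N) ≤ 1 / N`, and the `N` rows together to at most `1`. -/

lemma one_div_add_one_sq_le_sub {a : ℝ} (ha : 0 < a) :
    1 / (a + 1) ^ 2 ≤ 1 / a - 1 / (a + 1) := by
  rw [div_sub_div _ _ ha.ne' (by positivity), div_le_div_iff₀ (by positivity) (by positivity)]
  nlinarith

lemma tsum_one_div_add_nat_add_one_sq_le {a : ℝ} (ha : 0 < a) :
    ∑' m : ℕ, 1 / (a + m + 1) ^ 2 ≤ 1 / a := by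
  refine Real.tsum_le_of_sum_range_le (fun m => by positivity) fun M => ?_
  calc ∑ m ∈ Finset.range M, 1 / (a + m + 1) ^ 2
      ≤ ∑ m ∈ Finset.range M, (1 / (a + m) - 1 / (a + (m + 1 : ℕ))) :=
        Finset.sum_le_sum fun m _ => by
          simpa only [Nat.cast_add, Nat.cast_one, ← add_assoc] using
            one_div_add_one_sq_le_sub (a := a + m) (by positivity)
    _ = 1 / a - 1 / (a + M) := by
        simpa using Finset.sum_range_sub' (fun m : ℕ => 1 / (a + m)) M
    _ ≤ 1 / a := sub_le_self _ (by positivity)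

theorem hilbert_offcorner_bounded :
    ∃ C : ℝ, ∀ N : ℕ,
      (∑ n ∈ Finset.range N, ∑' m : ℕ,
          (1 : ℝ) / ((n : ℝ) + ((N : ℝ) + (m : ℝ)) + 1) ^ 2) ≤ C := by
  refine ⟨1, fun N => ?_⟩
  have row_le : ∀ n ∈ Finset.range N,
      ∑' m : ℕ, (1 : ℝ) / ((n : ℝ) + ((N : ℝ) + (m : ℝ)) + 1) ^ 2 ≤ 1 / (N : ℝ) := by
    intro n hn
    have hN : (0 : ℝ) < N := by exact_mod_cast (Finset.mem_range.mp hn).trans_le' n.zero_le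
    simp only [← add_assoc]
    exact (tsum_one_div_add_nat_add_one_sq_le (by positivity)).trans
      (one_div_le_one_div_of_le hN (le_add_of_nonneg_left n.cast_nonneg))
  calc _ ≤ ∑ _n ∈ Finset.range N, (1 : ℝ) / N := Finset.sum_le_sum row_le
    _ = N / N := by rw [Finset.sum_const, Finset.card_range, nsmul_eq_mul, mul_one_div]
    _ ≤ 1 := div_self_le_one _
end

section
/- Let z be on the unit circle with Im(z) ≠ 0, and let H_N be the N×N Hilbert matrix with entries 1/(π(n+m+1)), 0 ≤ n, m ≤ N−1, and U_{z²} the diagonal matrix with entries z^{2n}. Then the matrix entries of H_N U_{z²} H_N satisfy |(H_N U_{z²} H_N)(n,m)| ≤ (2/|1 − z²|) · 1/((1+n)(1+m)) for all 0 ≤ n, m ≤ N−1, uniformly in N. -/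
/-! Writing `w = z²`, the sum is `∑ a_l w^l` with real weights
`a_l = 1 / (π² (n+l+1)(l+m+1))`, which are nonnegative and decreasing in `l`. The partial sums of the
geometric series are bounded by `2 / |1 - w|` on the unit circle, so summation by parts bounds the
sum by `a_0 · 2 / |1 - w|`, and `a_0 ≤ 1 / ((1+n)(1+m))` because `π² ≥ 1`. -/

open Real Finset

theorem norm_sum_smul_le_of_antitone {E : Type*} [SeminormedAddCommGroup E] [NormedSpace ℝ E]
    {a : ℕ → ℝ} {v : ℕ → E} {B : ℝ} (ha : Antitone a) (ha_nonneg : ∀ i, 0 ≤ a i)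
    (hB : ∀ k, ‖∑ i ∈ range k, v i‖ ≤ B) (N : ℕ) :
    ‖∑ i ∈ range N, a i • v i‖ ≤ a 0 * B := by
  have hstep : ∀ i, 0 ≤ a i - a (i + 1) := fun i => sub_nonneg.mpr (ha i.le_succ)
  rw [sum_range_by_parts]
  calc _ ≤ ‖a (N - 1) • ∑ i ∈ range N, v i‖
          + ∑ i ∈ range (N - 1), ‖(a (i + 1) - a i) • ∑ j ∈ range (i + 1), v j‖ :=
        (norm_sub_le _ _).trans (add_le_add_right (norm_sum_le _ _) _)
    _ ≤ a (N - 1) * B + ∑ i ∈ range (N - 1), (a i - a (i + 1)) * B := by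
        gcongr with i
        · rw [norm_smul, norm_of_nonneg (ha_nonneg _)]
          exact mul_le_mul_of_nonneg_left (hB N) (ha_nonneg _)
        · rw [norm_smul, norm_sub_rev, norm_of_nonneg (hstep i)]
          exact mul_le_mul_of_nonneg_left (hB _) (hstep i)
    _ = a 0 * B := by rw [← sum_mul, sum_range_sub']; ring

theorem norm_geom_sum_le {𝕜 : Type*} [NormedDivisionRing 𝕜] {w : 𝕜} (hw : ‖w‖ ≤ 1) (hw1 : w ≠ 1)
    (k : ℕ) : ‖∑ i ∈ range k, w ^ i‖ ≤ 2 / ‖1 - w‖ := by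
  have hpos : 0 < ‖1 - w‖ := norm_pos_iff.mpr (sub_ne_zero.mpr hw1.symm)
  rw [geom_sum_eq hw1, norm_div, norm_sub_rev w]
  gcongr
  calc ‖w ^ k - 1‖ ≤ ‖w ^ k‖ + ‖(1 : 𝕜)‖ := norm_sub_le _ _
    _ ≤ 2 := by rw [norm_pow, norm_one]; linarith [pow_le_one₀ (norm_nonneg w) hw (n := k)]

theorem Complex.sq_ne_one_of_im_ne_zero {z : ℂ} (h : z.im ≠ 0) : z ^ 2 ≠ 1 := by
  rw [Ne, sq_eq_one_iff]
  rintro (rfl | rfl) <;> simp at h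

noncomputable def hilbertProductWeight (n m l : ℕ) : ℝ := 1 / (π ^ 2 * (n + l + 1) * (l + m + 1))

theorem hilbertProductWeight_nonneg (n m l : ℕ) : 0 ≤ hilbertProductWeight n m l := by
  unfold hilbertProductWeight; positivity

theorem antitone_hilbertProductWeight (n m : ℕ) : Antitone (hilbertProductWeight n m) := by
  intro l l' hll'
  have hcast : (l : ℝ) ≤ l' := by exact_mod_cast hll'
  unfold hilbertProductWeight
  gcongr

theorem hilbertProductWeight_zero_le (n m : ℕ) :
    hilbertProductWeight n m 0 ≤ 1 / ((1 + n) * (1 + m)) := by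
  have hpi : (1 : ℝ) ≤ π ^ 2 := one_le_pow₀ (by linarith [pi_gt_three])
  unfold hilbertProductWeight
  rw [Nat.cast_zero, add_zero, zero_add, mul_assoc, add_comm (n : ℝ), add_comm (m : ℝ)]
  exact one_div_le_one_div_of_le (by positivity) (le_mul_of_one_le_left (by positivity) hpi)

theorem hilbert_oscillating_product_bound_general (z : ℂ) (hz : ‖z‖ = 1) (hIm : z.im ≠ 0)
    (N : ℕ) (n m : ℕ) :
    ‖∑ l ∈ Finset.range N,
        z ^ (2 * l) / ((π : ℂ) ^ 2 * ((n : ℂ) + (l : ℂ) + 1) * ((l : ℂ) + (m : ℂ) + 1))‖ ≤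
      2 / ‖1 - z ^ 2‖ * (1 / ((1 + (n : ℝ)) * (1 + (m : ℝ)))) := by
  have hsummand : ∀ l : ℕ,
      z ^ (2 * l) / ((π : ℂ) ^ 2 * ((n : ℂ) + (l : ℂ) + 1) * ((l : ℂ) + (m : ℂ) + 1))
        = hilbertProductWeight n m l • (z ^ 2) ^ l := fun l => by
    simp only [hilbertProductWeight, Complex.real_smul, ← pow_mul]
    push_cast
    ring
  rw [sum_congr rfl fun l _ => hsummand l, mul_comm]
  calc _ ≤ hilbertProductWeight n m 0 * (2 / ‖1 - z ^ 2‖) :=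
        norm_sum_smul_le_of_antitone (antitone_hilbertProductWeight n m)
          (hilbertProductWeight_nonneg n m)
          (norm_geom_sum_le (by rw [norm_pow, hz, one_pow]) (Complex.sq_ne_one_of_im_ne_zero hIm)) N
    _ ≤ _ := by gcongr; exact hilbertProductWeight_zero_le n m

theorem hilbert_oscillating_product_bound (z : ℂ) (hz : ‖z‖ = 1) (hIm : z.im ≠ 0)
    (N : ℕ) (n m : ℕ) (hn : n < N) (hm : m < N) :
    ‖∑ l ∈ Finset.range N,
        z ^ (2 * l) / ((π : ℂ) ^ 2 * ((n : ℂ) + (l : ℂ) + 1) * ((l : ℂ) + (m : ℂ) + 1))‖ ≤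
      2 / ‖1 - z ^ 2‖ * (1 / ((1 + (n : ℝ)) * (1 + (m : ℝ)))) :=
  hilbert_oscillating_product_bound_general z hz hIm N n m
end
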